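/- arXiv:2205.05382 — 9 statements merged into one kernel-verified Lean document; each statement's English description precedes it below -/
import Mathlib

section
/- Let S be a monad on a category C, T a monad on a category D, and L ⊣ R an adjunction with L : C → D, R : D → C, unit η : Id ⇒ R∘L and counit ε : L∘R ⇒ Id. A natural transformation ρ : S∘R ⇒ R∘T is an Eilenberg-Moore law if and only if its transpose λ : L∘S ⇒ T∘L, defined componentwise by λ_A = ε_{T(L(A))} ∘ L(ρ_{L(A)}) ∘ L(S(η_A)), is a Kleisli law. -/
/-!
The transpose is the mate of `ρ` along `L ⊣ R`, and the mates correspondence `mateEquiv` is a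
bijection. It is compatible with whiskering a square by natural transformations along its free
sides, sends the identity square of `L` to that of `R`, and turns pasting of squares along `S`
into pasting along `T`. Hence it carries the unit and multiplication equations of a Kleisli law
for the transpose exactly onto those of an Eilenberg-Moore law for `ρ`.
-/

open CategoryTheory

universe v₁ v₂ u₁ u₂

variable {C : Type u₁} [Category.{v₁} C] {D : Type u₂} [Category.{v₂} D]

/-- The transpose along an adjunction `L ⊣ R` of a natural transformation
`ρ : S∘R ⟹ R∘T`, with components `λ_A = ε_{T(L(A))} ∘ L(ρ_{L(A)}) ∘ L(S(η_A))`. -/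
def transpose (S : Monad C) (T : Monad D) {L : C ⥤ D} {R : D ⥤ C} (adj : L ⊣ R)
    (ρ : R ⋙ S.toFunctor ⟶ T.toFunctor ⋙ R) :
    S.toFunctor ⋙ L ⟶ L ⋙ T.toFunctor where
  app A := L.map (S.map (adj.unit.app A)) ≫ L.map (ρ.app (L.obj A)) ≫
      adj.counit.app (T.obj (L.obj A))
  naturality X Y f := by
    have hρ := ρ.naturality (L.map f)
    simp only [Functor.comp_map] at hρ
    have hη := adj.unit.naturality f
    simp only [Functor.comp_map, Functor.id_map] at hη
    have hε := adj.counit.naturality (T.map (L.map f))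
    simp only [Functor.comp_map, Functor.id_map] at hε
    simp only [Functor.comp_map]
    rw [← Category.assoc, ← L.map_comp, ← S.map_comp, hη, S.map_comp, L.map_comp,
      Category.assoc, ← Category.assoc (L.map (S.map (R.map (L.map f)))), ← L.map_comp, hρ,
      L.map_comp]
    simp only [Category.assoc]
    rw [← hε]

namespace CategoryTheory

open TwoSquare

section Mates

universe v₃ v₄ u₃ u₄

variable {E : Type u₃} [Category.{v₃} E] {F : Type u₄} [Category.{v₄} F]
  {G G' : C ⥤ E} {H H' : D ⥤ F} {L₁ : C ⥤ D} {R₁ : D ⥤ C} {L₂ : E ⥤ F} {R₂ : F ⥤ E}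
  (adj₁ : L₁ ⊣ R₁) (adj₂ : L₂ ⊣ R₂)

lemma mateEquiv_whiskerTop (w : TwoSquare G' L₁ L₂ H) (α : G ⟶ G') :
    mateEquiv adj₁ adj₂ (w.whiskerTop α) = (mateEquiv adj₁ adj₂ w).whiskerRight α := by
  ext B
  simp

lemma mateEquiv_whiskerBottom (w : TwoSquare G L₁ L₂ H) (β : H ⟶ H') :
    mateEquiv adj₁ adj₂ (w.whiskerBottom β) = (mateEquiv adj₁ adj₂ w).whiskerLeft β := by
  ext B
  simp [← R₂.map_comp, -Functor.map_comp]

lemma mateEquiv_hId {L : C ⥤ D} {R : D ⥤ C} (adj : L ⊣ R) :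
    mateEquiv adj adj (𝟙ₕ L) = 𝟙ᵥ R := by
  ext B
  simp

end Mates

section Laws

variable (S : Monad C) (T : Monad D) {L : C ⥤ D} {R : D ⥤ C}

/- A Kleisli law `L ∘ S ⇒ T ∘ L` is a 2-square with `S` on top and `T` at the bottom, an
Eilenberg-Moore law `S ∘ R ⇒ R ∘ T` one with `T` on the left and `S` on the right: these are
the two sides of `mateEquiv adj adj`. -/
def IsKleisliLaw (l : TwoSquare S.toFunctor L L T.toFunctor) : Prop :=
  l.whiskerTop S.η = (𝟙ₕ L).whiskerBottom T.η ∧ l.whiskerTop S.μ = (l ≫ₕ l).whiskerBottom T.μ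

def IsEilenbergMooreLaw (r : TwoSquare R T.toFunctor S.toFunctor R) : Prop :=
  r.whiskerRight S.η = (𝟙ᵥ R).whiskerLeft T.η ∧ r.whiskerRight S.μ = (r ≫ᵥ r).whiskerLeft T.μ

lemma isKleisliLaw_iff (l : TwoSquare S.toFunctor L L T.toFunctor) :
    IsKleisliLaw S T l ↔
      (∀ A : C, L.map (S.η.app A) ≫ l.app A = T.η.app (L.obj A)) ∧
      (∀ A : C, L.map (S.μ.app A) ≫ l.app A =
        l.app (S.obj A) ≫ T.map (l.app A) ≫ T.μ.app (L.obj A)) := by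
  simp [IsKleisliLaw, TwoSquare.ext_iff]

lemma isEilenbergMooreLaw_iff (r : TwoSquare R T.toFunctor S.toFunctor R) :
    IsEilenbergMooreLaw S T r ↔
      (∀ B : D, S.η.app (R.obj B) ≫ r.app B = R.map (T.η.app B)) ∧
      (∀ B : D, S.μ.app (R.obj B) ≫ r.app B =
        S.map (r.app B) ≫ r.app (T.obj B) ≫ R.map (T.μ.app B)) := by
  simp [IsEilenbergMooreLaw, TwoSquare.ext_iff]

lemma isEilenbergMooreLaw_mateEquiv_iff (adj : L ⊣ R)
    (l : TwoSquare S.toFunctor L L T.toFunctor) :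
    IsEilenbergMooreLaw S T (mateEquiv adj adj l) ↔ IsKleisliLaw S T l := by
  rw [IsEilenbergMooreLaw, IsKleisliLaw, ← mateEquiv_hId adj, ← mateEquiv_vcomp,
    ← mateEquiv_whiskerTop, ← mateEquiv_whiskerTop, ← mateEquiv_whiskerBottom,
    ← mateEquiv_whiskerBottom, (mateEquiv adj adj).apply_eq_iff_eq,
    (mateEquiv adj adj).apply_eq_iff_eq]

lemma mateEquiv_transpose (adj : L ⊣ R) (ρ : TwoSquare R T.toFunctor S.toFunctor R) :
    mateEquiv adj adj (transpose S T adj ρ) = ρ :=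
  (mateEquiv adj adj).eq_symm_apply.mp <| by
    ext A
    simp [transpose]

end Laws

end CategoryTheory

/-- A natural transformation `ρ : S∘R ⟹ R∘T` is an Eilenberg-Moore law if and only if its
transpose `λ : L∘S ⟹ T∘L` along the adjunction `L ⊣ R`, with components
`λ_A = ε_{T(L(A))} ∘ L(ρ_{L(A)}) ∘ L(S(η_A))`, is a Kleisli law. -/
theorem em_law_iff_transpose_kleisli_law
    (S : Monad C) (T : Monad D) {L : C ⥤ D} {R : D ⥤ C} (adj : L ⊣ R)
    (ρ : R ⋙ S.toFunctor ⟶ T.toFunctor ⋙ R) :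
    ((∀ B : D, S.η.app (R.obj B) ≫ ρ.app B = R.map (T.η.app B)) ∧
     (∀ B : D, S.μ.app (R.obj B) ≫ ρ.app B =
        S.map (ρ.app B) ≫ ρ.app (T.obj B) ≫ R.map (T.μ.app B))) ↔
    ((∀ A : C, L.map (S.η.app A) ≫ (transpose S T adj ρ).app A = T.η.app (L.obj A)) ∧
     (∀ A : C, L.map (S.μ.app A) ≫ (transpose S T adj ρ).app A =
        (transpose S T adj ρ).app (S.obj A) ≫ T.map ((transpose S T adj ρ).app A) ≫
          T.μ.app (L.obj (A)))) := by
  calc _ ↔ IsEilenbergMooreLaw S T ρ := (isEilenbergMooreLaw_iff S T ρ).symm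
    _ ↔ IsEilenbergMooreLaw S T (mateEquiv adj adj (transpose S T adj ρ)) :=
      iff_of_eq (congrArg _ (mateEquiv_transpose S T adj ρ).symm)
    _ ↔ IsKleisliLaw S T (transpose S T adj ρ) := isEilenbergMooreLaw_mateEquiv_iff S T adj _
    _ ↔ _ := isKleisliLaw_iff S T _
end

section
/- Let S be a monad on C, T a monad on D, H : C → D a functor, (A, α) an Eilenberg-Moore S-algebra, (and λ_A : H(S(A)) → T(H(A)) a morphism in D). Assume the classifying coequalizer (W_α, ω_α) with coequalizer morphism q_α exists in EM(T). Then the composite u := q_α ∘ η^T_{H(A)} : H(A) → W_α is a left λ_A-morphism from α to ω_α, and it is universal: for every Eilenberg-Moore T-algebra (B, β) and every left λ_A-morphism h : H(A) → B from α to β, there exists a unique T-algebra morphism ĥ : (W_α, ω_α) → (B, β) such that ĥ ∘ u = h. Hence left λ_A-morphisms from α to β are in bijection with T-algebra morphisms (W_α, ω_α) → (B, β). -/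
open CategoryTheory

universe v₁ v₂ u₁ u₂

/-!
Write `X = H(S(A))`, `Y = H(A)` and `g = H(α)`.
The free–forgetful adjunction identifies algebra morphisms `F^T(Y) ⟶ (B, β)` with morphisms
`h : Y ⟶ B` via `k ↦ η ≫ k`, the inverse being `h ↦ T(h) ≫ β`. Since `e` is the free extension of
`lam`, this identification turns the coequalizing condition `e ≫ k = F^T(g) ≫ k` into the
left-morphism equation `lam ≫ T(h) ≫ β = g ≫ h`. Composing with the universal property of the
coequalizer gives the bijection, and the universal left morphism `u` is the image of `𝟙 W`.
-/

namespace CategoryTheory.Monad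

variable {D : Type u₂} [Category.{v₂} D] {T : Monad D}

def IsLeftMorphism {X Y : D} (lam : X ⟶ T.obj Y) (g : X ⟶ Y) (B : Algebra T) (h : Y ⟶ B.A) :
    Prop :=
  lam ≫ T.map h ≫ B.a = g ≫ h

theorem adj_homEquiv_apply {Y : D} {B : Algebra T} (k : T.free.obj Y ⟶ B) :
    T.adj.homEquiv Y B k = T.η.app Y ≫ k.f := by
  rw [Adjunction.homEquiv_unit, adj_unit]
  rfl

theorem free_hom_f_eq {Y : D} {B : Algebra T} (k : T.free.obj Y ⟶ B) :
    k.f = T.map (T.η.app Y ≫ k.f) ≫ B.a := by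
  erw [Functor.map_comp, Category.assoc, k.h, T.right_unit_assoc]

section FreeExtension

variable {X Y : D} {lam : X ⟶ T.obj Y} {g : X ⟶ Y} {e : T.free.obj X ⟶ T.free.obj Y}

theorem unit_comp_comp_f_of_f_eq (he : e.f = T.map lam ≫ T.μ.app Y) {B : Algebra T}
    (k : T.free.obj Y ⟶ B) : T.η.app X ≫ (e ≫ k).f = lam ≫ k.f := by
  erw [Algebra.comp_f, he, Category.assoc, ← T.η.naturality_assoc, T.left_unit_assoc]
  rfl

theorem comp_eq_comp_iff_isLeftMorphism (he : e.f = T.map lam ≫ T.μ.app Y) {B : Algebra T}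
    (k : T.free.obj Y ⟶ B) :
    e ≫ k = T.free.map g ≫ k ↔ IsLeftMorphism lam g B (T.η.app Y ≫ k.f) := by
  rw [← (T.adj.homEquiv X B).apply_eq_iff_eq, adj_homEquiv_apply, adj_homEquiv_apply,
    unit_comp_comp_f_of_f_eq he, Algebra.comp_f, free_map_f, IsLeftMorphism]
  erw [← free_hom_f_eq k, ← T.η.naturality_assoc]
  rfl

def leftMorphismEquiv (he : e.f = T.map lam ≫ T.μ.app Y) (B : Algebra T) :
    {k : T.free.obj Y ⟶ B // e ≫ k = T.free.map g ≫ k} ≃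
      {h : Y ⟶ B.A // IsLeftMorphism lam g B h} :=
  (T.adj.homEquiv Y B).subtypeEquiv fun k => by
    rw [adj_homEquiv_apply]
    exact comp_eq_comp_iff_isLeftMorphism he k

variable {W : Algebra T} {q : T.free.obj Y ⟶ W}

theorem isLeftMorphism_unit_comp (he : e.f = T.map lam ≫ T.μ.app Y)
    (hq : e ≫ q = T.free.map g ≫ q) : IsLeftMorphism lam g W (T.η.app Y ≫ q.f) :=
  (comp_eq_comp_iff_isLeftMorphism he q).1 hq

noncomputable def classifyingEquiv (he : e.f = T.map lam ≫ T.μ.app Y)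
    {hq : e ≫ q = T.free.map g ≫ q} (hW : Limits.IsColimit (Limits.Cofork.ofπ q hq))
    (B : Algebra T) : (W ⟶ B) ≃ {h : Y ⟶ B.A // IsLeftMorphism lam g B h} :=
  (Limits.Cofork.IsColimit.homIso hW B).trans (leftMorphismEquiv he B)

theorem classifyingEquiv_apply_coe (he : e.f = T.map lam ≫ T.μ.app Y)
    {hq : e ≫ q = T.free.map g ≫ q} (hW : Limits.IsColimit (Limits.Cofork.ofπ q hq))
    {B : Algebra T} (k : W ⟶ B) :
    (classifyingEquiv he hW B k).1 = (T.η.app Y ≫ q.f) ≫ k.f := by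
  change T.adj.homEquiv Y B (q ≫ k) = _
  rw [adj_homEquiv_apply, Algebra.comp_f]
  exact (Category.assoc _ _ _).symm

end FreeExtension

end CategoryTheory.Monad

open CategoryTheory.Monad in
/-- **Universal bimorphisms.**  Let `S` be a monad on `C`, `T` a monad on `D`, `H : C ⥤ D` a
functor, `(A, α)` an Eilenberg-Moore `S`-algebra and `lam : H(S(A)) ⟶ T(H(A))` a morphism of
`D`.  Let `e : F^T(H(S(A))) ⟶ F^T(H(A))` be the `T`-algebra morphism with underlying morphism
`μ^T_{H(A)} ∘ T(lam)`, and assume the classifying coequalizer `(W, ω)` of the parallel pair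
`e, F^T(H(α))` exists in `EM(T)`, with coequalizer morphism `q` (the coequalizer property is
stated explicitly via `hq` and `huniv`).  Then `u := q ∘ η^T_{H(A)}` is a left `lam`-morphism
from `α` to `ω`; it is universal: every left `lam`-morphism `h` from `α` to a `T`-algebra
`(B, β)` factors as `h = ĥ ∘ u` for a unique `T`-algebra morphism `ĥ : (W, ω) ⟶ (B, β)`;
hence composition with `u` is a bijection between `T`-algebra morphisms `(W, ω) ⟶ (B, β)`
and left `lam`-morphisms from `α` to `β`. -/
theorem universal_bimorphisms
    {C : Type u₁} [Category.{v₁} C] {D : Type u₂} [Category.{v₂} D]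
    (S : Monad C) (T : Monad D) (H : C ⥤ D) (A : Monad.Algebra S)
    (lam : H.obj (S.obj A.A) ⟶ T.obj (H.obj A.A))
    (e : T.free.obj (H.obj (S.obj A.A)) ⟶ T.free.obj (H.obj A.A))
    (he : e.f = T.map lam ≫ T.μ.app (H.obj A.A))
    (W : Monad.Algebra T) (q : T.free.obj (H.obj A.A) ⟶ W)
    (hq : e ≫ q = T.free.map (H.map A.a) ≫ q)
    (huniv : ∀ (B : Monad.Algebra T) (k : T.free.obj (H.obj A.A) ⟶ B),
      e ≫ k = T.free.map (H.map A.a) ≫ k → ∃! k' : W ⟶ B, q ≫ k' = k) :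
    (lam ≫ T.map (T.η.app (H.obj A.A) ≫ q.f) ≫ W.a =
      H.map A.a ≫ (T.η.app (H.obj A.A) ≫ q.f)) ∧
    (∀ (B : Monad.Algebra T) (h : H.obj A.A ⟶ B.A),
      lam ≫ T.map h ≫ B.a = H.map A.a ≫ h →
        ∃! hhat : W ⟶ B, (T.η.app (H.obj A.A) ≫ q.f) ≫ hhat.f = h) ∧
    (∀ B : Monad.Algebra T,
      ∃ eqv : (W ⟶ B) ≃ {h : H.obj A.A ⟶ B.A // lam ≫ T.map h ≫ B.a = H.map A.a ≫ h},
        ∀ k : W ⟶ B, (eqv k).1 = (T.η.app (H.obj A.A) ≫ q.f) ≫ k.f) := by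
  have hW : Limits.IsColimit (Limits.Cofork.ofπ q hq) :=
    Limits.Cofork.IsColimit.ofExistsUnique fun s => huniv _ s.π s.condition
  refine ⟨isLeftMorphism_unit_comp he hq, fun B h hh => ?_,
    fun B => ⟨classifyingEquiv he hW B, classifyingEquiv_apply_coe he hW⟩⟩
  obtain ⟨k, hk⟩ := (classifyingEquiv he hW B).surjective ⟨h, hh⟩
  have hkh : (T.η.app (H.obj A.A) ≫ q.f) ≫ k.f = h :=
    (classifyingEquiv_apply_coe he hW k).symm.trans (congrArg Subtype.val hk)
  refine ⟨k, hkh, fun k' hk' => (classifyingEquiv he hW B).injective (Subtype.ext ?_)⟩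
  rw [hk, classifyingEquiv_apply_coe he hW k', hk']
end

section
/- Let S be a monad on C, T a monad on D, H : C → D a functor, (A, α) and (A', α') Eilenberg-Moore S-algebras for which the classifying coequalizers (W_α, ω_α) and (W_{α'}, ω_{α'}) exist, and λ_A : H(S(A)) → T(H(A)), λ_{A'} : H(S(A')) → T(H(A')) morphisms in D. Then every S-algebra morphism f : (A, α) → (A', α') with respect to which λ is natural, i.e. satisfying T(H(f)) ∘ λ_A = λ_{A'} ∘ H(S(f)), induces a unique T-algebra morphism Ĥ(f) : (W_α, ω_α) → (W_{α'}, ω_{α'}) satisfying Ĥ(f) ∘ q_α = q_{α'} ∘ F^T(H(f)). Moreover Ĥ(id) = id, and Ĥ(g ∘ f) = Ĥ(g) ∘ Ĥ(f) whenever Ĥ(f) and Ĥ(g) are both induced in this way. -/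
/-!
Naturality of `λ` along `f`, together with naturality of `μ^T`, says that `F^T(H f)` intertwines
the Kleisli extensions `μ^T ∘ T(λ)`; since `f` is an `S`-algebra map it also intertwines
`F^T(H α)` and `F^T(H α')`. Hence `F^T(H f) ≫ q'` coequalizes the pair defining `W` and factors
uniquely through `q`. The identity and composition laws are pasting of commutative squares.
-/

open CategoryTheory

universe v₁ v₂ u₁ u₂

namespace CategoryTheory.Monad

variable {C : Type u₁} [Category.{v₁} C] {D : Type u₂} [Category.{v₂} D]

lemma map_comp_μ_comp_map {T : Monad D} {X X' Y Y' : D} {lam : Y ⟶ T.obj X}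
    {lam' : Y' ⟶ T.obj X'} {g : Y ⟶ Y'} {h : X ⟶ X'} (w : lam ≫ T.map h = g ≫ lam') :
    (T.map lam ≫ T.μ.app X) ≫ T.map h = T.map g ≫ T.map lam' ≫ T.μ.app X' := by
  rw [Category.assoc, ← T.μ.naturality h, Functor.comp_map, ← T.map_comp_assoc,
    ← T.map_comp_assoc, w]

lemma comp_free_map_eq_free_map_comp {T : Monad D} {X X' Y Y' : D} {lam : Y ⟶ T.obj X}
    {lam' : Y' ⟶ T.obj X'} {g : Y ⟶ Y'} {h : X ⟶ X'} (w : lam ≫ T.map h = g ≫ lam')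
    {e : T.free.obj Y ⟶ T.free.obj X} (he : e.f = T.map lam ≫ T.μ.app X)
    {e' : T.free.obj Y' ⟶ T.free.obj X'} (he' : e'.f = T.map lam' ≫ T.μ.app X') :
    e ≫ T.free.map h = T.free.map g ≫ e' := by
  ext
  rw [Algebra.comp_f, Algebra.comp_f, he, he', free_map_f, free_map_f]
  exact map_comp_μ_comp_map w

theorem existsUnique_classifying_map {S : Monad C} {T : Monad D} {H : C ⥤ D}
    {A A' : Algebra S} {lamA : H.obj (S.obj A.A) ⟶ T.obj (H.obj A.A)}
    {lamA' : H.obj (S.obj A'.A) ⟶ T.obj (H.obj A'.A)}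
    {e : T.free.obj (H.obj (S.obj A.A)) ⟶ T.free.obj (H.obj A.A)}
    (he : e.f = T.map lamA ≫ T.μ.app (H.obj A.A))
    {e' : T.free.obj (H.obj (S.obj A'.A)) ⟶ T.free.obj (H.obj A'.A)}
    (he' : e'.f = T.map lamA' ≫ T.μ.app (H.obj A'.A))
    {W : Algebra T} {q : T.free.obj (H.obj A.A) ⟶ W}
    (huniv : ∀ (B : Algebra T) (k : T.free.obj (H.obj A.A) ⟶ B),
      e ≫ k = T.free.map (H.map A.a) ≫ k → ∃! k' : W ⟶ B, q ≫ k' = k)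
    {W' : Algebra T} {q' : T.free.obj (H.obj A'.A) ⟶ W'}
    (hq' : e' ≫ q' = T.free.map (H.map A'.a) ≫ q')
    (f : A ⟶ A') (hf : lamA ≫ T.map (H.map f.f) = H.map (S.map f.f) ≫ lamA') :
    ∃! F : W ⟶ W', q ≫ F = T.free.map (H.map f.f) ≫ q' := by
  have he_square : e ≫ T.free.map (H.map f.f) = T.free.map (H.map (S.map f.f)) ≫ e' :=
    comp_free_map_eq_free_map_comp hf he he'
  have ha_square : T.free.map (H.map (S.map f.f)) ≫ T.free.map (H.map A'.a) =
      T.free.map (H.map A.a) ≫ T.free.map (H.map f.f) := by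
    simp only [← Functor.map_comp, f.h]
  refine huniv _ _ ?_
  calc e ≫ T.free.map (H.map f.f) ≫ q'
      = T.free.map (H.map (S.map f.f)) ≫ e' ≫ q' := by rw [reassoc_of% he_square]
    _ = T.free.map (H.map (S.map f.f)) ≫ T.free.map (H.map A'.a) ≫ q' := by rw [hq']
    _ = T.free.map (H.map A.a) ≫ T.free.map (H.map f.f) ≫ q' := by rw [reassoc_of% ha_square]

end CategoryTheory.Monad

theorem classifying_object_local_functoriality_general
    {C : Type u₁} [Category.{v₁} C] {D : Type u₂} [Category.{v₂} D]
    (S : Monad C) (T : Monad D) (H : C ⥤ D)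
    (A A' A'' : Monad.Algebra S)
    (lamA : H.obj (S.obj A.A) ⟶ T.obj (H.obj A.A))
    (lamA' : H.obj (S.obj A'.A) ⟶ T.obj (H.obj A'.A))
    (lamA'' : H.obj (S.obj A''.A) ⟶ T.obj (H.obj A''.A))
    (e : T.free.obj (H.obj (S.obj A.A)) ⟶ T.free.obj (H.obj A.A))
    (he : e.f = T.map lamA ≫ T.μ.app (H.obj A.A))
    (e' : T.free.obj (H.obj (S.obj A'.A)) ⟶ T.free.obj (H.obj A'.A))
    (he' : e'.f = T.map lamA' ≫ T.μ.app (H.obj A'.A))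
    (W : Monad.Algebra T) (q : T.free.obj (H.obj A.A) ⟶ W)
    (huniv : ∀ (B : Monad.Algebra T) (k : T.free.obj (H.obj A.A) ⟶ B),
      e ≫ k = T.free.map (H.map A.a) ≫ k → ∃! k' : W ⟶ B, q ≫ k' = k)
    (W' : Monad.Algebra T) (q' : T.free.obj (H.obj A'.A) ⟶ W')
    (hq' : e' ≫ q' = T.free.map (H.map A'.a) ≫ q')
    (W'' : Monad.Algebra T) (q'' : T.free.obj (H.obj A''.A) ⟶ W'') :
    (∀ f : A ⟶ A',
      lamA ≫ T.map (H.map f.f) = H.map (S.map f.f) ≫ lamA' →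
        ∃! F : W ⟶ W', q ≫ F = T.free.map (H.map f.f) ≫ q') ∧
    (q ≫ 𝟙 W = T.free.map (H.map (𝟙 A.A)) ≫ q) ∧
    (∀ (f : A ⟶ A') (g : A' ⟶ A'') (F : W ⟶ W') (G : W' ⟶ W''),
      lamA ≫ T.map (H.map f.f) = H.map (S.map f.f) ≫ lamA' →
      lamA' ≫ T.map (H.map g.f) = H.map (S.map g.f) ≫ lamA'' →
      q ≫ F = T.free.map (H.map f.f) ≫ q' →
      q' ≫ G = T.free.map (H.map g.f) ≫ q'' →
      q ≫ (F ≫ G) = T.free.map (H.map (f ≫ g).f) ≫ q'') :=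
  ⟨Monad.existsUnique_classifying_map he he' huniv hq', by simp,
    fun f g F G _ _ hF hG => by
      rw [reassoc_of% hF, hG, Monad.Algebra.comp_f, H.map_comp, Functor.map_comp_assoc]⟩

/-- **Local functoriality of classifying objects.**  Let `S` be a monad on `C`, `T` a monad
on `D` and `H : C ⥤ D` a functor.  Let `(A, α), (A', α'), (A'', α'')` be Eilenberg-Moore
`S`-algebras equipped with morphisms `lamA : H(S(A)) ⟶ T(H(A))` (and similarly `lamA'`,
`lamA''`), for which the classifying coequalizers `(W, q), (W', q'), (W'', q'')` of the
parallel pairs `μ^T ∘ T(lam), F^T(H(structure map))` exist in `EM(T)` (the coequalizer data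
is given explicitly by `e, he, hq, huniv` etc.).  Then:
* every `S`-algebra morphism `f : (A, α) ⟶ (A', α')` with respect to which `lam` is natural
  induces a unique `T`-algebra morphism `F : W ⟶ W'` with `q ≫ F = F^T(H(f)) ≫ q'`;
* the identity morphism `𝟙 W` satisfies the defining equation for the morphism induced by
  `𝟙 A` (so `Ĥ(id) = id`);
* whenever `F` and `G` are induced by `f` and `g` as above, the composite `F ≫ G` satisfies
  the defining equation for the morphism induced by `f ≫ g` (so `Ĥ(g ∘ f) = Ĥ(g) ∘ Ĥ(f)`). -/
theorem classifying_object_local_functoriality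
    {C : Type u₁} [Category.{v₁} C] {D : Type u₂} [Category.{v₂} D]
    (S : Monad C) (T : Monad D) (H : C ⥤ D)
    (A A' A'' : Monad.Algebra S)
    (lamA : H.obj (S.obj A.A) ⟶ T.obj (H.obj A.A))
    (lamA' : H.obj (S.obj A'.A) ⟶ T.obj (H.obj A'.A))
    (lamA'' : H.obj (S.obj A''.A) ⟶ T.obj (H.obj A''.A))
    (e : T.free.obj (H.obj (S.obj A.A)) ⟶ T.free.obj (H.obj A.A))
    (he : e.f = T.map lamA ≫ T.μ.app (H.obj A.A))
    (e' : T.free.obj (H.obj (S.obj A'.A)) ⟶ T.free.obj (H.obj A'.A))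
    (he' : e'.f = T.map lamA' ≫ T.μ.app (H.obj A'.A))
    (e'' : T.free.obj (H.obj (S.obj A''.A)) ⟶ T.free.obj (H.obj A''.A))
    (he'' : e''.f = T.map lamA'' ≫ T.μ.app (H.obj A''.A))
    (W : Monad.Algebra T) (q : T.free.obj (H.obj A.A) ⟶ W)
    (hq : e ≫ q = T.free.map (H.map A.a) ≫ q)
    (huniv : ∀ (B : Monad.Algebra T) (k : T.free.obj (H.obj A.A) ⟶ B),
      e ≫ k = T.free.map (H.map A.a) ≫ k → ∃! k' : W ⟶ B, q ≫ k' = k)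
    (W' : Monad.Algebra T) (q' : T.free.obj (H.obj A'.A) ⟶ W')
    (hq' : e' ≫ q' = T.free.map (H.map A'.a) ≫ q')
    (huniv' : ∀ (B : Monad.Algebra T) (k : T.free.obj (H.obj A'.A) ⟶ B),
      e' ≫ k = T.free.map (H.map A'.a) ≫ k → ∃! k' : W' ⟶ B, q' ≫ k' = k)
    (W'' : Monad.Algebra T) (q'' : T.free.obj (H.obj A''.A) ⟶ W'')
    (hq'' : e'' ≫ q'' = T.free.map (H.map A''.a) ≫ q'')
    (huniv'' : ∀ (B : Monad.Algebra T) (k : T.free.obj (H.obj A''.A) ⟶ B),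
      e'' ≫ k = T.free.map (H.map A''.a) ≫ k → ∃! k' : W'' ⟶ B, q'' ≫ k' = k) :
    (∀ f : A ⟶ A',
      lamA ≫ T.map (H.map f.f) = H.map (S.map f.f) ≫ lamA' →
        ∃! F : W ⟶ W', q ≫ F = T.free.map (H.map f.f) ≫ q') ∧
    (q ≫ 𝟙 W = T.free.map (H.map (𝟙 A.A)) ≫ q) ∧
    (∀ (f : A ⟶ A') (g : A' ⟶ A'') (F : W ⟶ W') (G : W' ⟶ W''),
      lamA ≫ T.map (H.map f.f) = H.map (S.map f.f) ≫ lamA' →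
      lamA' ≫ T.map (H.map g.f) = H.map (S.map g.f) ≫ lamA'' →
      q ≫ F = T.free.map (H.map f.f) ≫ q' →
      q' ≫ G = T.free.map (H.map g.f) ≫ q'' →
      q ≫ (F ≫ G) = T.free.map (H.map (f ≫ g).f) ≫ q'') :=
  classifying_object_local_functoriality_general S T H A A' A'' lamA lamA' lamA'' e he e' he' W q
    huniv W' q' hq' W'' q''
end

section
/- Let S be a monad on C, T a monad on D, H : C → D a functor, and λ : H∘S ⇒ T∘H a natural transformation. If for every Eilenberg-Moore S-algebra (A, α) the classifying coequalizer (W_α, ω_α) exists in EM(T), then the assignment (A, α) ↦ (W_α, ω_α) extends to a functor Ĥ : EM(S) → EM(T), whose action on an S-algebra morphism f : (A, α) → (A', α') is the unique T-algebra morphism Ĥ(f) satisfying Ĥ(f) ∘ q_α = q_{α'} ∘ F^T(H(f)). -/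
/-! The parallel pair whose coequalizer is `W α` is natural in the `S`-algebra `α`: its second
leg is `F^T H` applied to the structure map, and its first leg has as underlying map the Kleisli
extension `μ^T ∘ T λ`, which is natural because `λ` and `μ^T` are. Pointwise coequalizers of a
parallel pair of natural transformations always assemble into a functor, with the action on
morphisms forced by the universal property. -/

open CategoryTheory Limits

universe v₁ v₂ u₁ u₂

section CoequalizerFunctor

variable {J : Type*} [Category J] {E : Type*} [Category E] {X Y : J ⥤ E} {u v : X ⟶ Y}
  {W : J → E} {q : ∀ j, Y.obj j ⟶ W j} {hq : ∀ j, u.app j ≫ q j = v.app j ≫ q j}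

variable (hW : ∀ j, IsColimit (Cofork.ofπ (q j) (hq j)))

noncomputable def coequalizerMap {j j' : J} (f : j ⟶ j') : W j ⟶ W j' :=
  Cofork.IsColimit.desc (hW j) (Y.map f ≫ q j') <| by
    rw [← u.naturality_assoc, hq, v.naturality_assoc]

@[simp]
theorem comp_coequalizerMap {j j' : J} (f : j ⟶ j') :
    q j ≫ coequalizerMap hW f = Y.map f ≫ q j' :=
  Cofork.IsColimit.π_desc' (hW j) _ _

noncomputable def coequalizerFunctor : J ⥤ E where
  obj := W
  map := coequalizerMap hW
  map_id j := Cofork.IsColimit.hom_ext (hW j) (by simp)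
  map_comp f g := Cofork.IsColimit.hom_ext (hW _) <| by
    rw [Cofork.π_ofπ, comp_coequalizerMap, ← Category.assoc, comp_coequalizerMap, Category.assoc,
      comp_coequalizerMap, Functor.map_comp, Category.assoc]

end CoequalizerFunctor

section Classifying

variable {C : Type u₁} [Category.{v₁} C] {D : Type u₂} [Category.{v₂} D]
  {S : Monad C} {T : Monad D} {H : C ⥤ D}

def kleisliLift (lam : S.toFunctor ⋙ H ⟶ H ⋙ T.toFunctor) :
    S.toFunctor ⋙ H ⋙ T.toFunctor ⟶ H ⋙ T.toFunctor :=
  Functor.whiskerRight lam T.toFunctor ≫ Functor.whiskerLeft H T.μ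

def classifyingPairFst (lam : S.toFunctor ⋙ H ⟶ H ⋙ T.toFunctor)
    (e : ∀ α : Monad.Algebra S, T.free.obj (H.obj (S.obj α.A)) ⟶ T.free.obj (H.obj α.A))
    (he : ∀ α : Monad.Algebra S, (e α).f = T.map (lam.app α.A) ≫ T.μ.app (H.obj α.A)) :
    S.forget ⋙ S.toFunctor ⋙ H ⋙ T.free ⟶ S.forget ⋙ H ⋙ T.free where
  app := e
  naturality α α' f := by
    ext
    show (T.free.map (H.map (S.map f.f)) ≫ e α').f = (e α ≫ T.free.map (H.map f.f)).f
    rw [Monad.Algebra.comp_f, Monad.Algebra.comp_f, he, he]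
    exact (kleisliLift lam).naturality f.f

def classifyingPairSnd : S.forget ⋙ S.toFunctor ⋙ H ⋙ T.free ⟶ S.forget ⋙ H ⋙ T.free where
  app α := T.free.map (H.map α.a)
  naturality α α' f := by
    show T.free.map (H.map (S.map f.f)) ≫ T.free.map (H.map α'.a) =
      T.free.map (H.map α.a) ≫ T.free.map (H.map f.f)
    simp only [← Functor.map_comp, Monad.Algebra.Hom.h]

end Classifying

/-- **Functorial universal bimorphisms.**  Let `S` be a monad on `C`, `T` a monad on `D`,
`H : C ⥤ D` a functor and `lam : H∘S ⟹ T∘H` a natural transformation.  Suppose that for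
every Eilenberg-Moore `S`-algebra `(A, α)` the classifying coequalizer `(W α, q α)` of the
parallel pair `μ^T_{H(A)} ∘ T(lam_A), F^T(H(α)) : F^T(H(S(A))) ⇉ F^T(H(A))` exists in
`EM(T)` (the coequalizer data being given explicitly by `e, he, W, q, hq, huniv`).  Then the
assignment `(A, α) ↦ W α` extends to a functor `Ĥ : EM(S) ⥤ EM(T)` whose action on an
`S`-algebra morphism `f : α ⟶ α'` is the unique `T`-algebra morphism `Ĥ(f)` satisfying
`Ĥ(f) ∘ q α = q α' ∘ F^T(H(f))`. -/
theorem classifying_objects_functorial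
    {C : Type u₁} [Category.{v₁} C] {D : Type u₂} [Category.{v₂} D]
    (S : Monad C) (T : Monad D) (H : C ⥤ D)
    (lam : S.toFunctor ⋙ H ⟶ H ⋙ T.toFunctor)
    (e : ∀ α : Monad.Algebra S, T.free.obj (H.obj (S.obj α.A)) ⟶ T.free.obj (H.obj α.A))
    (he : ∀ α : Monad.Algebra S, (e α).f = T.map (lam.app α.A) ≫ T.μ.app (H.obj α.A))
    (W : Monad.Algebra S → Monad.Algebra T)
    (q : ∀ α : Monad.Algebra S, T.free.obj (H.obj α.A) ⟶ W α)
    (hq : ∀ α : Monad.Algebra S, e α ≫ q α = T.free.map (H.map α.a) ≫ q α)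
    (huniv : ∀ (α : Monad.Algebra S) (B : Monad.Algebra T)
      (k : T.free.obj (H.obj α.A) ⟶ B),
      e α ≫ k = T.free.map (H.map α.a) ≫ k → ∃! k' : W α ⟶ B, q α ≫ k' = k) :
    ∃ (Hhat : Monad.Algebra S ⥤ Monad.Algebra T) (hobj : ∀ α, Hhat.obj α = W α),
      ∀ (α α' : Monad.Algebra S) (f : α ⟶ α'),
        q α ≫ (eqToHom (hobj α).symm ≫ Hhat.map f ≫ eqToHom (hobj α')) =
          T.free.map (H.map f.f) ≫ q α' := by
  let hW α : IsColimit (Cofork.ofπ (f := (classifyingPairFst lam e he).app α)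
      (g := classifyingPairSnd.app α) (q α) (hq α)) :=
    Cofork.IsColimit.ofExistsUnique fun s => huniv α s.pt s.π s.condition
  refine ⟨coequalizerFunctor hW, fun _ => rfl, fun α α' f => ?_⟩
  show q α ≫ 𝟙 _ ≫ coequalizerMap hW f ≫ 𝟙 _ = _
  rw [Category.id_comp, Category.comp_id]
  exact comp_coequalizerMap hW f
end

section
/- Let S be a monad on C, T a monad on D, H : C → D a functor, A an object of C, and suppose morphisms λ_A : H(S(A)) → T(H(A)) and λ_{S(A)} : H(S²(A)) → T(H(S(A))) are given which satisfy the Kleisli axioms at A, namely η^T_{H(A)} = λ_A ∘ H(η^S_A) and μ^T_{H(A)} ∘ T(λ_A) ∘ λ_{S(A)} = λ_A ∘ H(μ^S_A), and which are natural with respect to η^S_A, namely T(H(η^S_A)) ∘ λ_A = λ_{S(A)} ∘ H(S(η^S_A)). Then the T-algebra morphism μ^T_{H(A)} ∘ T(λ_A) : F^T(H(S(A))) → F^T(H(A)) is a coequalizer in EM(T) of the parallel pair μ^T_{H(S(A))} ∘ T(λ_{S(A)}) and F^T(H(μ^S_A)) from F^T(H(S²(A))) to F^T(H(S(A))). In particular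 the classifying coequalizer at the free S-algebra (S(A), μ^S_A) exists and is isomorphic to F^T(H(A)). -/
/-!
In `EM(T)` the morphism `e` is a split coequalizer of `p` and `F^T(H(μ^S_A))`, hence a
coequalizer: `F^T(H(η^S_A))` is a section of `e` (unit axiom), `F^T(H(S(η^S_A)))` is a section
of `F^T(H(μ^S_A))` (right unit law of `S`), naturality says
`F^T(H(S(η^S_A))) ≫ p = e ≫ F^T(H(η^S_A))`, and the multiplication axiom says that `e`
coequalizes the pair. Maps out of a free algebra are compared through their restriction along
`η^T`, where `e` and `p` restrict to `λ_A` and `λ_{S(A)}`.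
-/

open CategoryTheory

universe v₁ v₂ u₁ u₂

namespace CategoryTheory.Monad

variable {D : Type u₂} [Category.{v₂} D] {T : Monad D}

lemma free_hom_ext {X : D} {B : T.Algebra} {m₁ m₂ : T.free.obj X ⟶ B}
    (h : T.η.app X ≫ m₁.f = T.η.app X ≫ m₂.f) : m₁ = m₂ :=
  (T.adj.homEquiv X B).injective <| by
    simp only [Adjunction.homEquiv_unit, adj_unit, forget_map]
    exact h

lemma eta_comp_f_of_f_eq {X Y : D} {l : X ⟶ T.obj Y}
    {m : T.free.obj X ⟶ T.free.obj Y} (hm : m.f = T.map l ≫ T.μ.app Y) :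
    T.η.app X ≫ m.f = l := by
  rw [hm]
  exact (T.η.naturality_assoc l (T.μ.app Y)).symm.trans
    (by rw [Functor.id_map, T.left_unit, Category.comp_id])

lemma eta_comp_comp_f_of_f_eq {X Y : D} {l : X ⟶ T.obj Y}
    {m : T.free.obj X ⟶ T.free.obj Y} (hm : m.f = T.map l ≫ T.μ.app Y)
    {B : T.Algebra} (k : T.free.obj Y ⟶ B) :
    T.η.app X ≫ (m ≫ k).f = l ≫ k.f :=
  (Category.assoc _ m.f k.f).symm.trans (congrArg (· ≫ k.f) (eta_comp_f_of_f_eq hm))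

lemma eta_comp_free_map_comp_f {X Y : D} {B : T.Algebra} (g : X ⟶ Y) (m : T.free.obj Y ⟶ B) :
    T.η.app X ≫ (T.free.map g ≫ m).f = g ≫ T.η.app Y ≫ m.f :=
  (T.η.naturality_assoc g m.f).symm

def freeIsSplitCoequalizerOfKleisli {X Y Z : D} {m : X ⟶ Y} {u : Z ⟶ Y} {v : Y ⟶ X}
    {lY : Y ⟶ T.obj Z} {lX : X ⟶ T.obj Y} (hv : v ≫ m = 𝟙 Y) (hunit : u ≫ lY = T.η.app Z)
    (hmul : lX ≫ T.map lY ≫ T.μ.app Z = m ≫ lY) (hnat : lY ≫ T.map u = v ≫ lX)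
    {e : T.free.obj Y ⟶ T.free.obj Z} (he : e.f = T.map lY ≫ T.μ.app Z)
    {p : T.free.obj X ⟶ T.free.obj Y} (hp : p.f = T.map lX ≫ T.μ.app Y) :
    IsSplitCoequalizer p (T.free.map m) e where
  rightSection := T.free.map u
  leftSection := T.free.map v
  condition := free_hom_ext <| by
    rw [eta_comp_comp_f_of_f_eq hp, eta_comp_free_map_comp_f, eta_comp_f_of_f_eq he]
    exact (congrArg (lX ≫ ·) he).trans hmul
  rightSection_π := free_hom_ext <| by
    rw [eta_comp_free_map_comp_f, eta_comp_f_of_f_eq he]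
    exact hunit.trans (Category.comp_id _).symm
  leftSection_bottom := by rw [← Functor.map_comp, hv, Functor.map_id]
  leftSection_top := free_hom_ext <| by
    rw [eta_comp_free_map_comp_f, eta_comp_comp_f_of_f_eq he, eta_comp_f_of_f_eq hp]
    exact hnat.symm

end CategoryTheory.Monad

/-- **The classifying coequalizer at a free algebra.**  Let `S` be a monad on `C`, `T` a
monad on `D`, `H : C ⥤ D` a functor, `A` an object of `C`, and let
`lamA : H(S(A)) ⟶ T(H(A))` and `lamSA : H(S²(A)) ⟶ T(H(S(A)))` satisfy the Kleisli axioms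
at `A` and be natural with respect to `η^S_A`.  Let `e : F^T(H(S(A))) ⟶ F^T(H(A))` be the
`T`-algebra morphism with underlying morphism `μ^T_{H(A)} ∘ T(lamA)`, and
`p : F^T(H(S²(A))) ⟶ F^T(H(S(A)))` the one with underlying morphism
`μ^T_{H(S(A))} ∘ T(lamSA)`.  Then `e` is a coequalizer in `EM(T)` of the parallel pair
`p, F^T(H(μ^S_A))`; in particular the classifying coequalizer at the free `S`-algebra
`(S(A), μ^S_A)` exists and is isomorphic to `F^T(H(A))`. -/
theorem classifying_coequalizer_at_free_algebra
    {C : Type u₁} [Category.{v₁} C] {D : Type u₂} [Category.{v₂} D]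
    (S : Monad C) (T : Monad D) (H : C ⥤ D) (A : C)
    (lamA : H.obj (S.obj A) ⟶ T.obj (H.obj A))
    (lamSA : H.obj (S.obj (S.obj A)) ⟶ T.obj (H.obj (S.obj A)))
    (hunit : H.map (S.η.app A) ≫ lamA = T.η.app (H.obj A))
    (hmul : lamSA ≫ T.map lamA ≫ T.μ.app (H.obj A) = H.map (S.μ.app A) ≫ lamA)
    (hnat : lamA ≫ T.map (H.map (S.η.app A)) = H.map (S.map (S.η.app A)) ≫ lamSA)
    (e : T.free.obj (H.obj (S.obj A)) ⟶ T.free.obj (H.obj A))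
    (he : e.f = T.map lamA ≫ T.μ.app (H.obj A))
    (p : T.free.obj (H.obj (S.obj (S.obj A))) ⟶ T.free.obj (H.obj (S.obj A)))
    (hp : p.f = T.map lamSA ≫ T.μ.app (H.obj (S.obj A))) :
    p ≫ e = T.free.map (H.map (S.μ.app A)) ≫ e ∧
    ∀ (B : Monad.Algebra T) (k : T.free.obj (H.obj (S.obj A)) ⟶ B),
      p ≫ k = T.free.map (H.map (S.μ.app A)) ≫ k →
        ∃! k' : T.free.obj (H.obj A) ⟶ B, e ≫ k' = k := by
  have hsection : H.map (S.map (S.η.app A)) ≫ H.map (S.μ.app A) = 𝟙 _ := by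
    rw [← H.map_comp, S.right_unit, H.map_id]
  let split := Monad.freeIsSplitCoequalizerOfKleisli hsection hunit hmul hnat he hp
  exact ⟨split.condition, fun _ k hk =>
    Limits.Cofork.IsColimit.existsUnique split.isCoequalizer k hk⟩
end

section
/- Let S be a monad on C, T a monad on D, H : C → D a functor, and λ : H∘S ⇒ T∘H a Kleisli law such that for every Eilenberg-Moore S-algebra the classifying coequalizer exists, so that the functor Ĥ : EM(S) → EM(T) is defined. Then there is a natural isomorphism F^T ∘ H ≅ Ĥ ∘ F^S of functors C → EM(T), where F^S : C → EM(S) and F^T : D → EM(T) are the free algebra functors. -/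
/-!
For a free algebra `F^S A` the classifying pair `F^T(HSSA) ⇉ F^T(HSA)` is a split coequalizer
pair: it is coequalized by the transpose `k_A : F^T(HSA) ⟶ F^T(HA)` of `λ_A`, with sections
`F^T(Hη_A)` and `F^T(HSη_A)`; the split-coequalizer equations come from the two Kleisli law
axioms, naturality of `λ` and the unit law of `S`. Hence the classifying object of `F^S A` is `F^T(HA)`, and
naturality in `A` can be checked after precomposing with the epimorphism `k_A`.
-/

open CategoryTheory Limits

universe v₁ v₂ u₁ u₂

namespace CategoryTheory.IsSplitCoequalizer

variable {𝒞 : Type*} [Category 𝒞] {X Y Z W : 𝒞} {f g : X ⟶ Y} {π : Y ⟶ Z}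

noncomputable def isoOfExistsUnique (hπ : IsSplitCoequalizer f g π) {q : Y ⟶ W}
    (hq : f ≫ q = g ≫ q)
    (huniv : ∀ (B : 𝒞) (k : Y ⟶ B), f ≫ k = g ≫ k → ∃! k' : W ⟶ B, q ≫ k' = k) : Z ≅ W :=
  hπ.isCoequalizer.coconePointUniqueUpToIso
    (Cofork.IsColimit.ofExistsUnique (t := Cofork.ofπ q hq) fun s => huniv _ s.π s.condition)

lemma π_isoOfExistsUnique_hom (hπ : IsSplitCoequalizer f g π) {q : Y ⟶ W}
    (hq : f ≫ q = g ≫ q)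
    (huniv : ∀ (B : 𝒞) (k : Y ⟶ B), f ≫ k = g ≫ k → ∃! k' : W ⟶ B, q ≫ k' = k) :
    π ≫ (hπ.isoOfExistsUnique hq huniv).hom = q :=
  hπ.isCoequalizer.comp_coconePointUniqueUpToIso_hom _ WalkingParallelPair.one

lemma hom_ext (hπ : IsSplitCoequalizer f g π) {V : 𝒞} {h k : Z ⟶ V} (w : π ≫ h = π ≫ k) :
    h = k :=
  Cofork.IsColimit.hom_ext hπ.isCoequalizer w

end CategoryTheory.IsSplitCoequalizer

namespace CategoryTheory.Monad

variable {C : Type u₁} [Category.{v₁} C] {D : Type u₂} [Category.{v₂} D]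
  {S : Monad C} {T : Monad D} {H : C ⥤ D}

def freeTranspose (lam : S.toFunctor ⋙ H ⟶ H ⋙ T.toFunctor) (A : C) :
    T.free.obj (H.obj (S.obj A)) ⟶ T.free.obj (H.obj A) where
  f := T.map (lam.app A) ≫ T.μ.app (H.obj A)
  h := by
    show T.map (T.map (lam.app A) ≫ T.μ.app (H.obj A)) ≫ T.μ.app (H.obj A) =
      T.μ.app (H.obj (S.obj A)) ≫ T.map (lam.app A) ≫ T.μ.app (H.obj A)
    rw [T.map_comp, Category.assoc, T.assoc]
    exact Monad.mu_naturality_assoc _ T (lam.app A) _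

variable (lam : S.toFunctor ⋙ H ⟶ H ⋙ T.toFunctor)

lemma freeTranspose_naturality {A A' : C} (f : A ⟶ A') :
    T.free.map (H.map (S.map f)) ≫ freeTranspose lam A' =
      freeTranspose lam A ≫ T.free.map (H.map f) := by
  have hlam : H.map (S.map f) ≫ lam.app A' = lam.app A ≫ T.map (H.map f) := lam.naturality f
  ext
  show T.map (H.map (S.map f)) ≫ T.map (lam.app A') ≫ T.μ.app _ =
    (T.map (lam.app A) ≫ T.μ.app _) ≫ T.map (H.map f)
  rw [← T.map_comp_assoc, hlam, T.map_comp, Category.assoc, Category.assoc, T.mu_naturality]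

variable {lam}

def isSplitCoequalizerFreeTranspose
    (hunit : ∀ A : C, H.map (S.η.app A) ≫ lam.app A = T.η.app (H.obj A))
    (hmul : ∀ A : C, H.map (S.μ.app A) ≫ lam.app A =
      lam.app (S.obj A) ≫ T.map (lam.app A) ≫ T.μ.app (H.obj A)) (A : C) :
    IsSplitCoequalizer (freeTranspose lam (S.obj A)) (T.free.map (H.map (S.μ.app A)))
      (freeTranspose lam A) where
  rightSection := T.free.map (H.map (S.η.app A))
  leftSection := T.free.map (H.map (S.map (S.η.app A)))
  condition := by
    ext
    show (T.map (lam.app (S.obj A)) ≫ T.μ.app _) ≫ T.map (lam.app A) ≫ T.μ.app _ =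
      T.map (H.map (S.μ.app A)) ≫ T.map (lam.app A) ≫ T.μ.app _
    rw [← T.map_comp_assoc, hmul, T.map_comp, T.map_comp, Category.assoc, Category.assoc,
      Category.assoc, T.assoc]
    exact congrArg _ (Monad.mu_naturality_assoc _ T (lam.app A) _).symm
  rightSection_π := by
    ext
    show T.map (H.map (S.η.app A)) ≫ T.map (lam.app A) ≫ T.μ.app _ = 𝟙 (T.obj (H.obj A))
    rw [← T.map_comp_assoc, hunit, T.right_unit]
    rfl
  leftSection_bottom := by
    ext
    show T.map (H.map (S.map (S.η.app A))) ≫ T.map (H.map (S.μ.app A)) =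
      𝟙 (T.obj (H.obj (S.obj A)))
    rw [← T.map_comp, ← H.map_comp, S.right_unit, H.map_id, T.map_id]
    rfl
  leftSection_top := freeTranspose_naturality lam (S.η.app A)

end CategoryTheory.Monad

/-- **Universal bimorphisms and free constructions.**  Let `S` be a monad on `C`, `T` a monad
on `D`, `H : C ⥤ D` a functor, and `lam : H∘S ⟹ T∘H` a Kleisli law (`hunit`, `hmul`).
Suppose that for every Eilenberg-Moore `S`-algebra the classifying coequalizer exists (the
data being given by `e, he, W, q, hq, huniv`), and let `Ĥ : EM(S) ⥤ EM(T)` be the induced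
functor, i.e. a functor with `Ĥ(α) = W α` whose action on morphisms is characterized by
`Ĥ(f) ∘ q α = q α' ∘ F^T(H(f))`.  Then there is a natural isomorphism
`F^T ∘ H ≅ Ĥ ∘ F^S`. -/
theorem classifying_objects_commute_with_free
    {C : Type u₁} [Category.{v₁} C] {D : Type u₂} [Category.{v₂} D]
    (S : Monad C) (T : Monad D) (H : C ⥤ D)
    (lam : S.toFunctor ⋙ H ⟶ H ⋙ T.toFunctor)
    (hunit : ∀ A : C, H.map (S.η.app A) ≫ lam.app A = T.η.app (H.obj A))
    (hmul : ∀ A : C, H.map (S.μ.app A) ≫ lam.app A =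
      lam.app (S.obj A) ≫ T.map (lam.app A) ≫ T.μ.app (H.obj A))
    (e : ∀ α : Monad.Algebra S, T.free.obj (H.obj (S.obj α.A)) ⟶ T.free.obj (H.obj α.A))
    (he : ∀ α : Monad.Algebra S, (e α).f = T.map (lam.app α.A) ≫ T.μ.app (H.obj α.A))
    (W : Monad.Algebra S → Monad.Algebra T)
    (q : ∀ α : Monad.Algebra S, T.free.obj (H.obj α.A) ⟶ W α)
    (hq : ∀ α : Monad.Algebra S, e α ≫ q α = T.free.map (H.map α.a) ≫ q α)
    (huniv : ∀ (α : Monad.Algebra S) (B : Monad.Algebra T)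
      (k : T.free.obj (H.obj α.A) ⟶ B),
      e α ≫ k = T.free.map (H.map α.a) ≫ k → ∃! k' : W α ⟶ B, q α ≫ k' = k)
    (Hhat : Monad.Algebra S ⥤ Monad.Algebra T)
    (hobj : ∀ α, Hhat.obj α = W α)
    (hmap : ∀ (α α' : Monad.Algebra S) (f : α ⟶ α'),
      q α ≫ (eqToHom (hobj α).symm ≫ Hhat.map f ≫ eqToHom (hobj α')) =
        T.free.map (H.map f.f) ≫ q α') :
    Nonempty (H ⋙ T.free ≅ S.free ⋙ Hhat) := by
  have he_free : ∀ A, e (S.free.obj A) = Monad.freeTranspose lam (S.obj A) :=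
    fun A => Monad.Algebra.Hom.ext (he _)
  let hsplit := Monad.isSplitCoequalizerFreeTranspose hunit hmul
  have hq_free : ∀ A, Monad.freeTranspose lam (S.obj A) ≫ q (S.free.obj A) =
      T.free.map (H.map (S.μ.app A)) ≫ q (S.free.obj A) := fun A => he_free A ▸ hq _
  let φ A : T.free.obj (H.obj A) ≅ W (S.free.obj A) :=
    (hsplit A).isoOfExistsUnique (hq_free A) fun B k hk => huniv _ B k (by rwa [he_free])
  have hφ A : Monad.freeTranspose lam A ≫ (φ A).hom = q (S.free.obj A) :=
    (hsplit A).π_isoOfExistsUnique_hom _ _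
  refine ⟨NatIso.ofComponents (fun A => φ A ≪≫ eqToIso (hobj _).symm) fun {A A'} f => ?_⟩
  have hφ_natural : T.free.map (H.map f) ≫ (φ A').hom =
      (φ A).hom ≫ eqToHom (hobj _).symm ≫ Hhat.map (S.free.map f) ≫ eqToHom (hobj _) := by
    refine (hsplit A).hom_ext ?_
    rw [← reassoc_of% Monad.freeTranspose_naturality, hφ, reassoc_of% (hφ A)]
    exact (hmap _ _ (S.free.map f)).symm
  simp only [Iso.trans_hom, eqToIso.hom, Functor.comp_map, reassoc_of% hφ_natural]
  simp
end

section
/- Let S be a monad on C, T a monad on D, L ⊣ R an adjunction with L : C → D, unit η and counit ε, and ρ : S∘R ⇒ R∘T an Eilenberg-Moore law, with transpose Kleisli law λ : L∘S ⇒ T∘L given by λ_A = ε_{T(L(A))} ∘ L(ρ_{L(A)}) ∘ L(S(η_A)). For an Eilenberg-Moore S-algebra (A, α) and an Eilenberg-Moore T-algebra (B, β), a morphism h : A → R(B) is a right ρ-morphism from α to β (i.e. R(β) ∘ ρ_B ∘ S(h) = h ∘ α) if and only if its adjoint transpose ε_B ∘ L(h) : L(A) → B is a left λ-morphism from α to β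 (i.e. β ∘ T(ε_B ∘ L(h)) ∘ λ_A = (ε_B ∘ L(h)) ∘ L(α)). -/
/-!
The transpose law `λ` is the mate of `ρ` under `L ⊣ R`, so transposing `λ_A ≫ T(k)` along the
adjunction gives `S(k♭) ≫ ρ_B`, where `k♭ : A ⟶ R(B)` is the transpose of `k`. Hence the
bijection `(L(A) ⟶ B) ≃ (A ⟶ R(B))` carries the two sides of the left `λ`-morphism equation
for `k` to the two sides of the right `ρ`-morphism equation for `k♭`.
-/

open CategoryTheory

universe v₁ v₂ u₁ u₂

namespace CategoryTheory

variable {C : Type u₁} [Category.{v₁} C] {D : Type u₂} [Category.{v₂} D]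
  {L : C ⥤ D} {R : D ⥤ C} {F : C ⥤ C} {G : D ⥤ D} {X : C} {Y : D}

def IsRightMorphism (ρ : R ⋙ F ⟶ G ⋙ R) (a : F.obj X ⟶ X) (b : G.obj Y ⟶ Y)
    (h : X ⟶ R.obj Y) : Prop :=
  F.map h ≫ ρ.app Y ≫ R.map b = a ≫ h

def IsLeftMorphism (σ : F ⋙ L ⟶ L ⋙ G) (a : F.obj X ⟶ X) (b : G.obj Y ⟶ Y)
    (k : L.obj X ⟶ Y) : Prop :=
  σ.app X ≫ G.map k ≫ b = L.map a ≫ k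

namespace Adjunction

variable (adj : L ⊣ R) (ρ : R ⋙ F ⟶ G ⋙ R)

def transposeLaw : F ⋙ L ⟶ L ⋙ G :=
  ((mateEquiv adj adj).symm (.mk _ _ _ _ ρ)).natTrans

lemma transposeLaw_app (X : C) :
    (adj.transposeLaw ρ).app X =
      L.map (F.map (adj.unit.app X)) ≫ L.map (ρ.app (L.obj X)) ≫
        adj.counit.app (G.obj (L.obj X)) := by
  simp [transposeLaw]

lemma homEquiv_transposeLaw_app (X : C) :
    adj.homEquiv _ _ ((adj.transposeLaw ρ).app X) = F.map (adj.unit.app X) ≫ ρ.app (L.obj X) :=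
  (unit_mateEquiv_symm adj adj ρ X).symm

lemma homEquiv_transposeLaw_app_comp (k : L.obj X ⟶ Y) :
    adj.homEquiv _ _ ((adj.transposeLaw ρ).app X ≫ G.map k) =
      F.map (adj.homEquiv _ _ k) ≫ ρ.app Y := by
  rw [homEquiv_naturality_right, homEquiv_transposeLaw_app, Category.assoc,
    ← Functor.comp_map G R, ← ρ.naturality, Functor.comp_map, ← F.map_comp_assoc,
    homEquiv_unit]

lemma isRightMorphism_iff_isLeftMorphism_homEquiv_symm (a : F.obj X ⟶ X) (b : G.obj Y ⟶ Y)
    (h : X ⟶ R.obj Y) :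
    IsRightMorphism ρ a b h ↔
      IsLeftMorphism (adj.transposeLaw ρ) a b ((adj.homEquiv X Y).symm h) := by
  rw [IsLeftMorphism, ← (adj.homEquiv _ _).apply_eq_iff_eq, ← Category.assoc,
    homEquiv_naturality_right, homEquiv_transposeLaw_app_comp, homEquiv_naturality_left,
    Equiv.apply_symm_apply, Category.assoc]
  rfl

end Adjunction

end CategoryTheory

theorem right_rho_morphism_iff_transpose_left_lambda_morphism_general
    {C : Type u₁} [Category.{v₁} C] {D : Type u₂} [Category.{v₂} D]
    (S : Monad C) (T : Monad D) {L : C ⥤ D} {R : D ⥤ C} (adj : L ⊣ R)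
    (ρ : R ⋙ S.toFunctor ⟶ T.toFunctor ⋙ R)
    (A : Monad.Algebra S) (B : Monad.Algebra T) (h : A.A ⟶ R.obj B.A) :
    S.map h ≫ ρ.app B.A ≫ R.map B.a = A.a ≫ h ↔
      (L.map (S.map (adj.unit.app A.A)) ≫ L.map (ρ.app (L.obj A.A)) ≫
          adj.counit.app (T.obj (L.obj A.A))) ≫
        T.map (L.map h ≫ adj.counit.app B.A) ≫ B.a =
      L.map A.a ≫ (L.map h ≫ adj.counit.app B.A) := by
  rw [← adj.transposeLaw_app]
  exact adj.isRightMorphism_iff_isLeftMorphism_homEquiv_symm ρ A.a B.a h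

/-- **Transposing bimorphisms along an adjunction.**  Let `S` be a monad on `C`, `T` a monad
on `D`, `L ⊣ R` an adjunction (`L : C ⥤ D`) with unit `η` and counit `ε`, and
`ρ : S∘R ⟹ R∘T` an Eilenberg-Moore law whose transpose Kleisli law `λ : L∘S ⟹ T∘L` has
components `λ_A = ε_{T(L(A))} ∘ L(ρ_{L(A)}) ∘ L(S(η_A))`.  For an Eilenberg-Moore
`S`-algebra `(A, α)` and an Eilenberg-Moore `T`-algebra `(B, β)`, a morphism `h : A ⟶ R(B)`
is a right `ρ`-morphism from `α` to `β` if and only if its adjoint transpose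
`ε_B ∘ L(h) : L(A) ⟶ B` is a left `λ`-morphism from `α` to `β`. -/
theorem right_rho_morphism_iff_transpose_left_lambda_morphism
    {C : Type u₁} [Category.{v₁} C] {D : Type u₂} [Category.{v₂} D]
    (S : Monad C) (T : Monad D) {L : C ⥤ D} {R : D ⥤ C} (adj : L ⊣ R)
    (ρ : R ⋙ S.toFunctor ⟶ T.toFunctor ⋙ R)
    (hunit : ∀ B : D, S.η.app (R.obj B) ≫ ρ.app B = R.map (T.η.app B))
    (hmul : ∀ B : D, S.μ.app (R.obj B) ≫ ρ.app B =
      S.map (ρ.app B) ≫ ρ.app (T.obj B) ≫ R.map (T.μ.app B))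
    (A : Monad.Algebra S) (B : Monad.Algebra T) (h : A.A ⟶ R.obj B.A) :
    S.map h ≫ ρ.app B.A ≫ R.map B.a = A.a ≫ h ↔
      (L.map (S.map (adj.unit.app A.A)) ≫ L.map (ρ.app (L.obj A.A)) ≫
          adj.counit.app (T.obj (L.obj A.A))) ≫
        T.map (L.map h ≫ adj.counit.app B.A) ≫ B.a =
      L.map A.a ≫ (L.map h ≫ adj.counit.app B.A) :=
  right_rho_morphism_iff_transpose_left_lambda_morphism_general S T adj ρ A B h
end

section
/- Let S be a monad on C, T a monad on D, L ⊣ R an adjunction with L : C → D, and ρ : S∘R ⇒ R∘T an Eilenberg-Moore law. If the Eilenberg-Moore category EM(T) has coequalizers of reflexive pairs, then the lifted functor R^ρ : EM(T) → EM(S), which sends a T-algebra (B, β) to the S-algebra (R(B), R(β) ∘ ρ_B), has a left adjoint. -/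
/-!
`R^ρ` lies strictly over `R`: composing it with the forgetful functor of `EM(S)` gives the
forgetful functor of `EM(T)` followed by `R`. The forgetful functor of `EM(T)` and `R` are right
adjoints and that of `EM(S)` is monadic, so the adjoint lifting theorem produces a left adjoint of
`R^ρ` from reflexive coequalizers in `EM(T)`.
-/

open CategoryTheory

universe v₁ v₂ u₁ u₂

variable {C : Type u₁} [Category.{v₁} C] {D : Type u₂} [Category.{v₂} D]

/-- The lifting `R^ρ : EM(T) ⥤ EM(S)` of `R : D ⥤ C` induced by an Eilenberg-Moore law
`ρ : S∘R ⟹ R∘T`: it sends a `T`-algebra `(B, β)` to the `S`-algebra `(R(B), R(β) ∘ ρ_B)`. -/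
def emLift (S : Monad C) (T : Monad D) (R : D ⥤ C)
    (ρ : R ⋙ S.toFunctor ⟶ T.toFunctor ⋙ R)
    (hunit : ∀ B : D, S.η.app (R.obj B) ≫ ρ.app B = R.map (T.η.app B))
    (hmul : ∀ B : D, S.μ.app (R.obj B) ≫ ρ.app B =
      S.map (ρ.app B) ≫ ρ.app (T.obj B) ≫ R.map (T.μ.app B)) :
    Monad.Algebra T ⥤ Monad.Algebra S where
  obj B :=
    { A := R.obj B.A
      a := ρ.app B.A ≫ R.map B.a
      unit := by
        rw [← Category.assoc, hunit, ← R.map_comp, B.unit]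
        simp
      assoc := by
        have hnat := ρ.naturality B.a
        simp only [Functor.comp_map] at hnat
        rw [← Category.assoc, hmul]
        simp only [Category.assoc]
        rw [← R.map_comp, B.assoc, R.map_comp, ← Category.assoc (ρ.app (T.obj B.A)), ← hnat]
        simp }
  map {B B'} h :=
    { f := R.map h.f
      h := by
        have hnat := ρ.naturality h.f
        simp only [Functor.comp_map] at hnat
        dsimp only
        rw [← Category.assoc, hnat]
        simp only [Category.assoc]
        rw [← R.map_comp, h.h, R.map_comp] }
  map_id B := by
    apply Monad.Algebra.Hom.ext
    simp
  map_comp f g := by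
    apply Monad.Algebra.Hom.ext
    simp

def forgetCompIsoEmLiftCompForget (S : Monad C) (T : Monad D) (R : D ⥤ C)
    (ρ : R ⋙ S.toFunctor ⟶ T.toFunctor ⋙ R)
    (hunit : ∀ B : D, S.η.app (R.obj B) ≫ ρ.app B = R.map (T.η.app B))
    (hmul : ∀ B : D, S.μ.app (R.obj B) ≫ ρ.app B =
      S.map (ρ.app B) ≫ ρ.app (T.obj B) ≫ R.map (T.μ.app B)) :
    Monad.forget T ⋙ R ≅ emLift S T R ρ hunit hmul ⋙ Monad.forget S :=
  Iso.refl _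

/-- **The adjoint lifting theorem.**  Let `S` be a monad on `C`, `T` a monad on `D`,
`L ⊣ R` an adjunction with `L : C ⥤ D`, and `ρ : S∘R ⟹ R∘T` an Eilenberg-Moore law.  If the
Eilenberg-Moore category `EM(T)` has coequalizers of reflexive pairs, then the lifted
functor `R^ρ : EM(T) ⥤ EM(S)`, sending `(B, β)` to `(R(B), R(β) ∘ ρ_B)`, has a left
adjoint. -/
theorem emLift_isRightAdjoint (S : Monad C) (T : Monad D)
    {L : C ⥤ D} {R : D ⥤ C} (adj : L ⊣ R)
    (ρ : R ⋙ S.toFunctor ⟶ T.toFunctor ⋙ R)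
    (hunit : ∀ B : D, S.η.app (R.obj B) ≫ ρ.app B = R.map (T.η.app B))
    (hmul : ∀ B : D, S.μ.app (R.obj B) ≫ ρ.app B =
      S.map (ρ.app B) ≫ ρ.app (T.obj B) ≫ R.map (T.μ.app B))
    [Limits.HasReflexiveCoequalizers (Monad.Algebra T)] :
    (emLift S T R ρ hunit hmul).IsRightAdjoint := by
  have : R.IsRightAdjoint := adj.isRightAdjoint
  exact isRightAdjoint_square_lift_monadic _ (Monad.forget S) (Monad.forget T) R
    (forgetCompIsoEmLiftCompForget S T R ρ hunit hmul)
end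

section
/- Let C be a comonad on a category C₀, D a comonad on a category D₀, and G : C₀ → D₀ a functor. If ρ : D∘G ⇒ G∘C is a natural transformation such that all the relevant equalizers exist—namely, for every Eilenberg-Moore C-coalgebra (A, α), the equalizer in the Eilenberg-Moore category of D-coalgebras of the parallel pair of D-coalgebra morphisms F_D(G(A)) ⇉ F_D(G(C(A))) given by F_D(ρ_A) ∘ δ^D_{G(A)} and F_D(G(α)), where F_D is the cofree D-coalgebra functor—then the assignment (A, α) ↦ (W_α, ω_α) extends to a functor Ĝ from C-coalgebras to D-coalgebras. If, furthermore, ρ is a Kleisli law of comonads, then there is a natural isomorphism F_D ∘ G ≅ Ĝ ∘ F_C, where F_C and F_D are the cofree coalgebra functors. -/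
/-! The pair `F_D(ρ_A) ∘ δ^D_{G(A)}, F_D(G(α))` is natural in the coalgebra `(A, α)`: the first map
is the coKleisli extension of `ρ_A`, natural because `ρ` is, and the second is natural because
coalgebra morphisms commute with the structure maps. Hence any choice of equalizers `W α` is
functorial. For the cofree coalgebra `(C A, δ^C_A)` the Kleisli-law axioms make `F_D(G A)`, mapped
in by the coKleisli extension of `ρ_A`, a *split* equalizer of that pair, with retractions
`F_D(G(ε^C_A))` and `F_D(G(C(ε^C_A)))`; split equalizers are equalizers, so uniqueness of limits
gives `F_D(G A) ≅ W(C A)`, naturally in `A`. -/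

open CategoryTheory Limits

universe v₁ v₂ u₁ u₂

namespace CategoryTheory.Comonad

variable {C : Type*} [Category C] (T : Comonad C)

/-- The coKleisli extension of `h`, i.e. its transpose under `T.forget ⊣ T.cofree`. -/
def cofreeExtend {X Y : C} (h : T.obj X ⟶ Y) : T.cofree.obj X ⟶ T.cofree.obj Y where
  f := T.δ.app X ≫ T.map h
  h := by
    -- `(T.cofree.obj X).A` is not reducibly `T.obj X`, so goals are restated over `T.obj` first.
    show T.δ.app X ≫ T.map (T.δ.app X ≫ T.map h) = (T.δ.app X ≫ T.map h) ≫ T.δ.app Y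
    simp

def coaction : T.forget ⟶ T.forget ⋙ T.toFunctor where
  app A := A.a
  naturality _ _ f := f.h.symm

variable {T}

lemma cofreeExtend_comp_cofreeExtend {X Y Z : C} (h : T.obj X ⟶ Y) (h' : T.obj Y ⟶ Z) :
    T.cofreeExtend h ≫ T.cofreeExtend h' = T.cofreeExtend (T.δ.app X ≫ T.map h ≫ h') := by
  ext
  show (T.δ.app X ≫ T.map h) ≫ T.δ.app Y ≫ T.map h' =
    T.δ.app X ≫ T.map (T.δ.app X ≫ T.map h ≫ h')
  simp

lemma cofree_map_comp_cofreeExtend {X Y Z : C} (g : X ⟶ Y) (h : T.obj Y ⟶ Z) :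
    T.cofree.map g ≫ T.cofreeExtend h = T.cofreeExtend (T.map g ≫ h) := by
  ext
  show T.map g ≫ T.δ.app Y ≫ T.map h = T.δ.app X ≫ T.map (T.map g ≫ h)
  simp

lemma cofreeExtend_comp_cofree_map {X Y Z : C} (h : T.obj X ⟶ Y) (g : Y ⟶ Z) :
    T.cofreeExtend h ≫ T.cofree.map g = T.cofreeExtend (h ≫ g) := by
  ext
  show (T.δ.app X ≫ T.map h) ≫ T.map g = T.δ.app X ≫ T.map (h ≫ g)
  simp

lemma cofreeExtend_ε (X : C) : T.cofreeExtend (T.ε.app X) = 𝟙 (T.cofree.obj X) := by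
  ext
  exact T.right_counit X

def cofreeExtendNatTrans {B : Type*} [Category B] {F : B ⥤ C} {H : B ⥤ C}
    (ρ : F ⋙ T.toFunctor ⟶ H) : F ⋙ T.cofree ⟶ H ⋙ T.cofree where
  app X := T.cofreeExtend (ρ.app X)
  naturality X Y φ := by
    dsimp
    rw [cofree_map_comp_cofreeExtend, cofreeExtend_comp_cofree_map]
    exact congrArg T.cofreeExtend (ρ.naturality φ)

end CategoryTheory.Comonad

section

variable {J E : Type*} [Category J] [Category E] {P Q : J ⥤ E} {f g : P ⟶ Q}
  {c : ∀ j, Fork (f.app j) (g.app j)} (hc : ∀ j, IsLimit (c j))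

-- Reducible, so that `(functorOfIsLimitForks hc).obj j` is reducibly `(c j).pt` when rewriting.
@[reducible]
def functorOfIsLimitForks : J ⥤ E where
  obj j := (c j).pt
  map {j j'} φ := Fork.IsLimit.lift (hc j') ((c j).ι ≫ P.map φ) (by
    rw [Category.assoc, Category.assoc, f.naturality, g.naturality, (c j).condition_assoc])
  map_id j := Fork.IsLimit.hom_ext (hc j) (by simp)
  map_comp φ ψ := Fork.IsLimit.hom_ext (hc _) (by simp)

lemma functorOfIsLimitForks_map_ι {j j' : J} (φ : j ⟶ j') :
    (functorOfIsLimitForks hc).map φ ≫ (c j').ι = (c j).ι ≫ P.map φ :=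
  Fork.IsLimit.lift_ι' _ _ _

def isoCompFunctorOfIsLimitForks {I : Type*} [Category I] {K : I ⥤ J} {R : I ⥤ E}
    (κ : R ⟶ K ⋙ P) (hκ : ∀ i, κ.app i ≫ f.app (K.obj i) = κ.app i ≫ g.app (K.obj i))
    (hκlim : ∀ i, IsLimit (Fork.ofι (κ.app i) (hκ i))) :
    R ≅ K ⋙ functorOfIsLimitForks hc :=
  NatIso.ofComponents (fun i => (hκlim i).conePointUniqueUpToIso (hc (K.obj i))) fun {i i'} φ => by
    have hom_ι : ∀ i, ((hκlim i).conePointUniqueUpToIso (hc (K.obj i))).hom ≫ (c (K.obj i)).ι =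
        κ.app i := fun i =>
      IsLimit.conePointUniqueUpToIso_hom_comp _ _ WalkingParallelPair.zero
    refine Fork.IsLimit.hom_ext (hc (K.obj i')) ?_
    rw [Category.assoc, Category.assoc, hom_ι, Functor.comp_map, functorOfIsLimitForks_map_ι,
      reassoc_of% hom_ι]
    exact κ.naturality φ

end

section KleisliLaw

variable {C₀ : Type*} [Category C₀] {D₀ : Type*} [Category D₀] {Cm : Comonad C₀} {Dm : Comonad D₀}
  {G : C₀ ⥤ D₀} (ρ : G ⋙ Dm.toFunctor ⟶ Cm.toFunctor ⋙ G)

def isSplitEqualizerCofreeExtend {A : C₀}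
    (hε : ρ.app A ≫ G.map (Cm.ε.app A) = Dm.ε.app (G.obj A))
    (hδ : ρ.app A ≫ G.map (Cm.δ.app A) =
      Dm.δ.app (G.obj A) ≫ Dm.map (ρ.app A) ≫ ρ.app (Cm.obj A)) :
    IsSplitEqualizer (Dm.cofreeExtend (ρ.app (Cm.obj A))) (Dm.cofree.map (G.map (Cm.δ.app A)))
      (Dm.cofreeExtend (ρ.app A)) where
  leftRetraction := Dm.cofree.map (G.map (Cm.ε.app A))
  rightRetraction := Dm.cofree.map (G.map (Cm.map (Cm.ε.app A)))
  condition := by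
    rw [Comonad.cofreeExtend_comp_cofreeExtend, Comonad.cofreeExtend_comp_cofree_map, hδ]
  ι_leftRetraction := by
    rw [Comonad.cofreeExtend_comp_cofree_map, hε, Comonad.cofreeExtend_ε]
  bottom_rightRetraction := by
    rw [← Functor.map_comp, ← G.map_comp, Comonad.right_counit]
    simp
  top_rightRetraction := by
    rw [Comonad.cofreeExtend_comp_cofree_map, Comonad.cofree_map_comp_cofreeExtend]
    exact congrArg _ (ρ.naturality (Cm.ε.app A)).symm

end KleisliLaw

/-- **Classifying objects for comonad coalgebras and cofree coalgebras.**  Let `Cm` be a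
comonad on `C₀`, `Dm` a comonad on `D₀` and `G : C₀ ⥤ D₀` a functor.  Let
`ρ : Dm∘G ⟹ G∘Cm` be a natural transformation such that for every Eilenberg-Moore
`Cm`-coalgebra `(A, α)` the equalizer `(W α, q α)` in the Eilenberg-Moore category of
`Dm`-coalgebras of the parallel pair `F_D(ρ_A) ∘ δ^D_{G(A)}, F_D(G(α))` exists (the
equalizer data being given explicitly by `e, he, W, q, hq, huniv`, where `F_D` is the
cofree `Dm`-coalgebra functor).  Then the assignment `(A, α) ↦ W α` extends to a functor
`Ĝ` from `Cm`-coalgebras to `Dm`-coalgebras, characterized by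
`q α' ∘ Ĝ(f) = F_D(G(f)) ∘ q α`.  If, furthermore, `ρ` is a Kleisli law of comonads, then
there is a natural isomorphism `F_D ∘ G ≅ Ĝ ∘ F_C`. -/
theorem comonad_classifying_objects
    {C₀ : Type u₁} [Category.{v₁} C₀] {D₀ : Type u₂} [Category.{v₂} D₀]
    (Cm : Comonad C₀) (Dm : Comonad D₀) (G : C₀ ⥤ D₀)
    (ρ : G ⋙ Dm.toFunctor ⟶ Cm.toFunctor ⋙ G)
    (e : ∀ α : Comonad.Coalgebra Cm,
      Dm.cofree.obj (G.obj α.A) ⟶ Dm.cofree.obj (G.obj (Cm.obj α.A)))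
    (he : ∀ α : Comonad.Coalgebra Cm,
      (e α).f = Dm.δ.app (G.obj α.A) ≫ Dm.map (ρ.app α.A))
    (W : Comonad.Coalgebra Cm → Comonad.Coalgebra Dm)
    (q : ∀ α : Comonad.Coalgebra Cm, W α ⟶ Dm.cofree.obj (G.obj α.A))
    (hq : ∀ α : Comonad.Coalgebra Cm,
      q α ≫ e α = q α ≫ Dm.cofree.map (G.map α.a))
    (huniv : ∀ (α : Comonad.Coalgebra Cm) (B : Comonad.Coalgebra Dm)
      (k : B ⟶ Dm.cofree.obj (G.obj α.A)),
      k ≫ e α = k ≫ Dm.cofree.map (G.map α.a) → ∃! k' : B ⟶ W α, k' ≫ q α = k) :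
    ∃ (Ghat : Comonad.Coalgebra Cm ⥤ Comonad.Coalgebra Dm)
      (hobj : ∀ α, Ghat.obj α = W α),
      (∀ (α α' : Comonad.Coalgebra Cm) (f : α ⟶ α'),
        (eqToHom (hobj α).symm ≫ Ghat.map f ≫ eqToHom (hobj α')) ≫ q α' =
          q α ≫ Dm.cofree.map (G.map f.f)) ∧
      ((∀ A : C₀, ρ.app A ≫ G.map (Cm.ε.app A) = Dm.ε.app (G.obj A)) →
       (∀ A : C₀, ρ.app A ≫ G.map (Cm.δ.app A) =
          Dm.δ.app (G.obj A) ≫ Dm.map (ρ.app A) ≫ ρ.app (Cm.obj A)) →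
        Nonempty (G ⋙ Dm.cofree ≅ Cm.cofree ⋙ Ghat)) := by
  obtain rfl : e = fun α : Comonad.Coalgebra Cm => Dm.cofreeExtend (ρ.app α.A) :=
    funext fun α => Comonad.Coalgebra.Hom.ext (he α)
  let c : ∀ α, Fork ((Functor.whiskerLeft Cm.forget (Dm.cofreeExtendNatTrans ρ)).app α)
      ((Functor.whiskerRight Cm.coaction (G ⋙ Dm.cofree)).app α) := fun α => Fork.ofι (q α) (hq α)
  have hc : ∀ α, IsLimit (c α) := fun α =>
    Fork.IsLimit.ofExistsUnique fun s => huniv α s.pt s.ι s.condition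
  refine ⟨functorOfIsLimitForks hc, fun _ => rfl, fun α α' f => ?_, fun hε hδ => ⟨?_⟩⟩
  · rw [eqToHom_refl, eqToHom_refl, Category.id_comp, Category.comp_id]
    exact functorOfIsLimitForks_map_ι hc f
  · exact isoCompFunctorOfIsLimitForks hc (K := Cm.cofree) (Dm.cofreeExtendNatTrans ρ) _
      fun A => (isSplitEqualizerCofreeExtend ρ (hε A) (hδ A)).isEqualizer
end
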